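/- Let X be a Banach space with the Daugavet property with respect to a norming subspace Y ⊆ X*. Then for any x₁,…,x_n ∈ S_X, ε > 0, weights λ_i > 0 with Σλ_i = 1, and any g ∈ S_Y, there exist f₁,…,f_n ∈ S_Y with f_i ∈ S(B_{X*}, x_i, ε) for each i, such that ‖g + Σ λ_i f_i‖ ≥ 2 − ε. -/

import Mathlib

open scoped BigOperators
open Metric

noncomputable section

/-- `X` has the Daugavet property with respect to the subspace `Y` of `X*`. -/
def DaugavetWrt (X : Type*) [NormedAddCommGroup X] [NormedSpace ℝ X]
    (Y : Subspace ℝ (StrongDual ℝ X)) : Prop :=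
  ∀ x : X, ∀ g ∈ Y,
    ‖ContinuousLinearMap.id ℝ X + g.smulRight x‖ = 1 + ‖g.smulRight x‖

/-- `Y ⊆ X*` is a norming subspace. -/
def IsNorming (X : Type*) [NormedAddCommGroup X] [NormedSpace ℝ X]
    (Y : Subspace ℝ (StrongDual ℝ X)) : Prop :=
  ∀ x : X, ‖x‖ = sSup {r : ℝ | ∃ g ∈ Y, ‖g‖ ≤ 1 ∧ r = |g x|}

/-- The weak-star slice of the dual unit ball determined by `x` and `ε`. -/
def wSlice {X : Type*} [NormedAddCommGroup X] [NormedSpace ℝ X] (x : X) (ε : ℝ) :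
    Set (StrongDual ℝ X) :=
  {f | ‖f‖ ≤ 1 ∧ 1 - ε < f x}

/-!
The Daugavet equation `‖I + g ⊗ x‖ = 2` yields a unit vector `z` with `g z ≈ 1` and
`‖z + x‖ ≈ 2`; a norming functional `f ∈ S_Y` for `z + x` then lies in the slice at `x`
and satisfies `‖g + f‖ ≥ (g + f) z ≈ 2`. Applying this to the normalized partial sums
`v = g + ∑_{j<k} λ_j f_j` chooses `f_k` with `‖v + λ_k f_k‖ ≥ (1 - δ)(‖v‖ + λ_k)`,
so the full sum has norm at least `2 (1 - δ)^n ≥ 2 - 2nδ`.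
-/

theorem one_add_mul_one_sub_le_norm_add_smul {E : Type*} [SeminormedAddCommGroup E]
    [NormedSpace ℝ E] {u f : E} (hu : ‖u‖ ≤ 1) (hf : ‖f‖ ≤ 1) {δ t : ℝ} (ht : 0 ≤ t)
    (h : 2 - δ ≤ ‖u + f‖) :
    (1 + t) * (1 - δ) ≤ ‖u + t • f‖ := by
  have huf : ‖u + f‖ ≤ 2 := (norm_add_le u f).trans (by linarith)
  rcases le_total t 1 with ht1 | ht1
  · have : ‖u + f‖ ≤ ‖u + t • f‖ + (1 - t) :=
      calc ‖u + f‖ = ‖(u + t • f) + (1 - t) • f‖ := by rw [sub_smul, one_smul]; abel_nf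
        _ ≤ ‖u + t • f‖ + ‖(1 - t) • f‖ := norm_add_le _ _
        _ ≤ ‖u + t • f‖ + (1 - t) := by
          rw [norm_smul, Real.norm_of_nonneg (by linarith)]
          gcongr
          exact mul_le_of_le_one_right (by linarith) hf
    nlinarith
  · have : t * ‖u + f‖ ≤ ‖u + t • f‖ + (t - 1) :=
      calc t * ‖u + f‖ = ‖(u + t • f) + (t - 1) • u‖ := by
            rw [← Real.norm_of_nonneg ht, ← norm_smul, Real.norm_of_nonneg ht, sub_smul,
              one_smul, smul_add]
            abel_nf
        _ ≤ ‖u + t • f‖ + ‖(t - 1) • u‖ := norm_add_le _ _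
        _ ≤ ‖u + t • f‖ + (t - 1) := by
          rw [norm_smul, Real.norm_of_nonneg (by linarith)]
          gcongr
          exact mul_le_of_le_one_right (by linarith) hu
    nlinarith

theorem add_mul_one_sub_le_norm_add_smul {E : Type*} [NormedAddCommGroup E]
    [NormedSpace ℝ E] {v f : E} (hv : v ≠ 0) (hf : ‖f‖ ≤ 1) {δ t : ℝ} (ht : 0 ≤ t)
    (h : 2 - δ ≤ ‖‖v‖⁻¹ • v + f‖) :
    (‖v‖ + t) * (1 - δ) ≤ ‖v + t • f‖ := by
  have hv' : 0 < ‖v‖ := norm_pos_iff.mpr hv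
  have key := one_add_mul_one_sub_le_norm_add_smul (norm_smul_inv_norm hv).le hf
    (div_nonneg ht hv'.le) h
  have hrescale : v + t • f = ‖v‖ • (‖v‖⁻¹ • v + (t / ‖v‖) • f) := by
    rw [smul_add, smul_smul, smul_smul, mul_inv_cancel₀ hv'.ne', mul_div_cancel₀ _ hv'.ne',
      one_smul]
  calc (‖v‖ + t) * (1 - δ) = ‖v‖ * ((1 + t / ‖v‖) * (1 - δ)) := by field_simp
    _ ≤ ‖v‖ * ‖‖v‖⁻¹ • v + (t / ‖v‖) • f‖ := by gcongr; exact key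
    _ = ‖v + t • f‖ := by rw [hrescale, norm_smul, norm_norm]

section Daugavet

variable {X : Type*} [NormedAddCommGroup X] [NormedSpace ℝ X] {Y : Subspace ℝ (StrongDual ℝ X)}

theorem StrongDual.apply_le_norm_of_norm_le_one (f : StrongDual ℝ X) {z : X} (hz : ‖z‖ ≤ 1) :
    f z ≤ ‖f‖ :=
  (Real.le_norm_self _).trans (by simpa using f.le_of_opNorm_le_of_le le_rfl hz)

theorem IsNorming.exists_norm_eq_one_lt_apply (hY : IsNorming X Y) {y : X} {r : ℝ}
    (hr₀ : 0 ≤ r) (hr : r < ‖y‖) : ∃ h ∈ Y, ‖h‖ = 1 ∧ r < h y := by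
  have hbdd : BddAbove {s : ℝ | ∃ g ∈ Y, ‖g‖ ≤ 1 ∧ s = |g y|} := by
    refine ⟨‖y‖, ?_⟩
    rintro _ ⟨g, -, hg, rfl⟩
    simpa using g.le_of_opNorm_le_of_le hg le_rfl
  rw [hY y, lt_csSup_iff hbdd ⟨0, 0, Y.zero_mem, by simp⟩] at hr
  obtain ⟨_, ⟨g, hgY, hg, rfl⟩, hr⟩ := hr
  obtain ⟨g', hg'Y, hg', hg'y⟩ : ∃ g' ∈ Y, ‖g'‖ ≤ 1 ∧ r < g' y := by
    rcases le_total 0 (g y) with hgy | hgy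
    · exact ⟨g, hgY, hg, by rwa [abs_of_nonneg hgy] at hr⟩
    · exact ⟨-g, Y.neg_mem hgY, by rwa [norm_neg], by rwa [abs_of_nonpos hgy] at hr⟩
  have hg'pos : 0 < ‖g'‖ := norm_pos_iff.mpr (by rintro rfl; simp at hg'y; linarith)
  refine ⟨‖g'‖⁻¹ • g', Y.smul_mem _ hg'Y, norm_smul_inv_norm (norm_pos_iff.mp hg'pos), ?_⟩
  rw [smul_apply, smul_eq_mul]
  exact hg'y.trans_le (le_mul_of_one_le_left (by linarith) (one_le_inv₀ hg'pos |>.mpr hg'))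

theorem DaugavetWrt.exists_norm_add_apply_smul_gt (hD : DaugavetWrt X Y)
    {g : StrongDual ℝ X} (hgY : g ∈ Y) (hg : ‖g‖ = 1) {x : X} (hx : ‖x‖ = 1) {δ : ℝ}
    (hδ : 0 < δ) : ∃ z : X, ‖z‖ ≤ 1 ∧ 0 ≤ g z ∧ 2 - δ < ‖z + g z • x‖ := by
  have hT : ‖ContinuousLinearMap.id ℝ X + g.smulRight x‖ = 2 := by
    rw [hD x g hgY, ContinuousLinearMap.norm_smulRight_apply, hg, hx]; norm_num
  obtain ⟨z, hz, hTz⟩ := (ContinuousLinearMap.id ℝ X + g.smulRight x).exists_lt_apply_of_lt_opNorm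
    (r := 2 - δ) (by linarith)
  simp only [add_apply, ContinuousLinearMap.id_apply,
    ContinuousLinearMap.smulRight_apply] at hTz
  rcases le_total 0 (g z) with hgz | hgz
  · exact ⟨z, hz.le, hgz, hTz⟩
  · refine ⟨-z, by rw [norm_neg]; exact hz.le, by simpa using hgz, ?_⟩
    rwa [map_neg, neg_smul, ← neg_add, norm_neg]

theorem DaugavetWrt.exists_apply_gt_norm_add_gt (hD : DaugavetWrt X Y)
    {g : StrongDual ℝ X} (hgY : g ∈ Y) (hg : ‖g‖ = 1) {x : X} (hx : ‖x‖ = 1) {δ : ℝ}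
    (hδ : 0 < δ) : ∃ z : X, ‖z‖ ≤ 1 ∧ 1 - δ < g z ∧ 2 - δ < ‖z + x‖ := by
  obtain ⟨z, hz, hgz, hzx⟩ := hD.exists_norm_add_apply_smul_gt hgY hg hx (half_pos hδ)
  have hgz1 : g z ≤ 1 := hg ▸ g.apply_le_norm_of_norm_le_one hz
  have hupper : ‖z + g z • x‖ ≤ 1 + g z :=
    (norm_add_le _ _).trans (by rw [norm_smul, hx, Real.norm_of_nonneg hgz]; linarith)
  have hlower : ‖z + g z • x‖ ≤ ‖z + x‖ + (1 - g z) :=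
    calc ‖z + g z • x‖ = ‖(z + x) - (1 - g z) • x‖ := by
          rw [sub_smul, one_smul]; congr 1; abel
      _ ≤ ‖z + x‖ + ‖(1 - g z) • x‖ := norm_sub_le _ _
      _ = ‖z + x‖ + (1 - g z) := by rw [norm_smul, hx, Real.norm_of_nonneg (by linarith), mul_one]
  exact ⟨z, hz, by linarith, by linarith⟩

theorem DaugavetWrt.exists_mem_slice_norm_add_gt (hD : DaugavetWrt X Y) (hY : IsNorming X Y)
    {g : StrongDual ℝ X} (hgY : g ∈ Y) (hg : ‖g‖ = 1) {x : X} (hx : ‖x‖ = 1) {δ : ℝ}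
    (hδ : 0 < δ) : ∃ f ∈ Y, ‖f‖ = 1 ∧ 1 - δ < f x ∧ 2 - δ < ‖g + f‖ := by
  wlog hδ1 : δ ≤ 1 generalizing δ
  · obtain ⟨f, hfY, hf, hfx, hgf⟩ := this one_pos le_rfl
    exact ⟨f, hfY, hf, by linarith, by linarith⟩
  obtain ⟨z, hz, hgz, hzx⟩ := hD.exists_apply_gt_norm_add_gt hgY hg hx (half_pos hδ)
  obtain ⟨f, hfY, hf, hfzx⟩ := hY.exists_norm_eq_one_lt_apply (by linarith) hzx
  have hfz : f z ≤ 1 := hf ▸ f.apply_le_norm_of_norm_le_one hz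
  have hfx : f x ≤ 1 := hf ▸ f.apply_le_norm_of_norm_le_one hx.le
  have hgfz : (g + f) z ≤ ‖g + f‖ := (g + f).apply_le_norm_of_norm_le_one hz
  rw [map_add] at hfzx
  rw [add_apply] at hgfz
  exact ⟨f, hfY, hf, by linarith, by linarith⟩

theorem DaugavetWrt.exists_mem_slice_mul_le_norm_add_smul (hD : DaugavetWrt X Y)
    (hY : IsNorming X Y) {v : StrongDual ℝ X} (hvY : v ∈ Y) (hv : v ≠ 0) {x : X}
    (hx : ‖x‖ = 1) {δ t : ℝ} (hδ : 0 < δ) (ht : 0 ≤ t) :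
    ∃ f ∈ Y, ‖f‖ = 1 ∧ 1 - δ < f x ∧ (‖v‖ + t) * (1 - δ) ≤ ‖v + t • f‖ := by
  obtain ⟨f, hfY, hf, hfx, hvf⟩ :=
    hD.exists_mem_slice_norm_add_gt hY (Y.smul_mem _ hvY) (norm_smul_inv_norm hv) hx hδ
  exact ⟨f, hfY, hf, hfx, add_mul_one_sub_le_norm_add_smul hv hf.le ht hvf.le⟩

theorem DaugavetWrt.exists_mem_slices_pow_mul_le_norm_add_sum (hD : DaugavetWrt X Y)
    (hY : IsNorming X Y) {ι : Type*} (s : Finset ι) {x : ι → X} (hx : ∀ i, ‖x i‖ = 1)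
    {lam : ι → ℝ} (hlam : ∀ i, 0 ≤ lam i) {g : StrongDual ℝ X} (hgY : g ∈ Y) (hg : g ≠ 0)
    {δ : ℝ} (hδ : 0 < δ) (hδ1 : δ < 1) :
    ∃ f : ι → StrongDual ℝ X, (∀ i ∈ s, f i ∈ Y ∧ ‖f i‖ = 1 ∧ 1 - δ < f i (x i)) ∧
      (1 - δ) ^ s.card * (‖g‖ + ∑ i ∈ s, lam i) ≤ ‖g + ∑ i ∈ s, lam i • f i‖ := by
  classical
  induction s using Finset.induction_on with
  | empty => exact ⟨0, by simp, by simp⟩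
  | insert a s has ih =>
    obtain ⟨f, hf, hfs⟩ := ih
    set v := g + ∑ i ∈ s, lam i • f i
    have hvY : v ∈ Y := Y.add_mem hgY (Y.sum_mem fun i hi => Y.smul_mem _ (hf i hi).1)
    have hv : v ≠ 0 := by
      have hg' : 0 < ‖g‖ := norm_pos_iff.mpr hg
      have hlam_sum : 0 ≤ ∑ i ∈ s, lam i := Finset.sum_nonneg fun i _ => hlam i
      have hδ1' : 0 < 1 - δ := sub_pos.mpr hδ1
      rw [← norm_pos_iff]
      exact lt_of_lt_of_le (by positivity) hfs
    obtain ⟨fa, hfaY, hfa, hfax, hvfa⟩ :=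
      hD.exists_mem_slice_mul_le_norm_add_smul hY hvY hv (hx a) hδ (hlam a)
    have hupdate : ∀ i ∈ s, Function.update f a fa i = f i := fun i hi =>
      Function.update_of_ne (ne_of_mem_of_not_mem hi has) _ _
    refine ⟨Function.update f a fa, fun i hi => ?_, ?_⟩
    · rcases Finset.mem_insert.mp hi with rfl | hi
      · simpa using ⟨hfaY, hfa, hfax⟩
      · rw [hupdate i hi]; exact hf i hi
    · have hsum : ∑ i ∈ s, lam i • Function.update f a fa i = ∑ i ∈ s, lam i • f i :=
        Finset.sum_congr rfl fun i hi => by rw [hupdate i hi]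
      rw [Finset.sum_insert has, Finset.sum_insert has, Finset.card_insert_of_notMem has, hsum,
        Function.update_self]
      have hpow : (1 - δ) ^ s.card ≤ 1 := pow_le_one₀ (by linarith) (by linarith)
      calc (1 - δ) ^ (s.card + 1) * (‖g‖ + (lam a + ∑ i ∈ s, lam i))
          ≤ ((1 - δ) ^ s.card * (‖g‖ + ∑ i ∈ s, lam i) + lam a) * (1 - δ) := by
            rw [pow_succ]
            nlinarith [mul_le_mul_of_nonneg_left hpow (mul_nonneg (sub_pos.mpr hδ1).le (hlam a))]
        _ ≤ (‖v‖ + lam a) * (1 - δ) := by gcongr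
        _ ≤ ‖v + lam a • fa‖ := hvfa
        _ = ‖g + (lam a • fa + ∑ i ∈ s, lam i • f i)‖ := by rw [add_left_comm, add_comm]

end Daugavet

theorem daugavetWrt_norming_gives_functionals_in_slices_general
    (X : Type*) [NormedAddCommGroup X] [NormedSpace ℝ X]
    (Y : Subspace ℝ (StrongDual ℝ X))
    (hnorming : IsNorming X Y) (hD : DaugavetWrt X Y)
    (n : ℕ) (x : Fin n → X) (hx : ∀ i, ‖x i‖ = 1)
    (ε : ℝ) (hε : 0 < ε)
    (lam : Fin n → ℝ) (hlam : ∀ i, 0 < lam i) (hsum : ∑ i, lam i = 1)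
    (g : StrongDual ℝ X) (hgY : g ∈ Y) (hg : ‖g‖ = 1) :
    ∃ f : Fin n → StrongDual ℝ X,
      (∀ i, f i ∈ Y ∧ ‖f i‖ = 1 ∧ f i ∈ wSlice (x i) ε) ∧
      2 - ε ≤ ‖g + ∑ i, lam i • f i‖ := by
  set δ := min (ε / (2 * n + 2)) (1 / 2)
  have hδ : 0 < δ := lt_min (by positivity) one_half_pos
  have hδ1 : δ < 1 := (min_le_right _ _).trans_lt (by norm_num)
  have hδε : δ * (2 * n + 2) ≤ ε := (le_div_iff₀ (by positivity)).mp (min_le_left _ _)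
  obtain ⟨f, hf, hnorm⟩ := hD.exists_mem_slices_pow_mul_le_norm_add_sum hnorming Finset.univ hx
    (fun i => (hlam i).le) hgY (norm_ne_zero_iff.mp (by simp [hg])) hδ hδ1
  rw [Finset.card_univ, Fintype.card_fin, hg, hsum] at hnorm
  have hbernoulli : 1 + n * -δ ≤ (1 + -δ) ^ n := one_add_mul_le_pow (by linarith) n
  refine ⟨f, fun i => ?_, by rw [← sub_eq_add_neg] at hbernoulli; nlinarith⟩
  obtain ⟨hfY, hf1, hfx⟩ := hf i (Finset.mem_univ i)
  exact ⟨hfY, hf1, hf1.le, by nlinarith⟩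

theorem daugavetWrt_norming_gives_functionals_in_slices
    (X : Type*) [NormedAddCommGroup X] [NormedSpace ℝ X] [CompleteSpace X]
    (Y : Subspace ℝ (StrongDual ℝ X))
    (hnorming : IsNorming X Y) (hD : DaugavetWrt X Y)
    (n : ℕ) (x : Fin n → X) (hx : ∀ i, ‖x i‖ = 1)
    (ε : ℝ) (hε : 0 < ε)
    (lam : Fin n → ℝ) (hlam : ∀ i, 0 < lam i) (hsum : ∑ i, lam i = 1)
    (g : StrongDual ℝ X) (hgY : g ∈ Y) (hg : ‖g‖ = 1) :
    ∃ f : Fin n → StrongDual ℝ X,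
      (∀ i, f i ∈ Y ∧ ‖f i‖ = 1 ∧ f i ∈ wSlice (x i) ε) ∧
      2 - ε ≤ ‖g + ∑ i, lam i • f i‖ :=
  daugavetWrt_norming_gives_functionals_in_slices_general X Y hnorming hD n x hx ε hε lam hlam hsum
    g hgY hg
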